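/- In a solvable SRI instance with all preference lists of length at most 5 and with no (1,1)-pairs and no (5,5)-pairs, any stable matching M satisfies c(M) ≤ 2 · c(M_egal), where M_egal is an egalitarian stable matching. -/

import Mathlib

/-- An instance of the Stable Roommates problem with Incomplete (strict) lists:
a graph together with a rank function, where `rank u v` is one plus the number
of neighbours of `u` that `u` strictly prefers to `v`, and ranks of distinct
neighbours are distinct (strict preferences). -/
structure SRI (V : Type*) [Fintype V] where
  G : SimpleGraph V
  rank : V → V → ℕ
  rank_eq : ∀ u v, G.Adj u v →
    rank u v = 1 + Set.ncard {w | G.Adj u w ∧ rank u w < rank u v}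
  rank_inj : ∀ u v w, G.Adj u v → G.Adj u w → rank u v = rank u w → v = w

variable {V : Type*} [Fintype V]

/-- A matching: a symmetric partial pairing along edges of the graph. -/
structure SRI.Matching (I : SRI V) where
  M : V → Option V
  symm : ∀ u v, M u = some v → M v = some u
  adj : ∀ u v, M u = some v → I.G.Adj u v

/-- Edge `uv` blocks `N`. -/
def SRI.Blocks (I : SRI V) (N : I.Matching) (u v : V) : Prop :=
  I.G.Adj u v ∧ N.M u ≠ some v ∧
  (N.M u = none ∨ ∃ w, N.M u = some w ∧ I.rank u v < I.rank u w) ∧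
  (N.M v = none ∨ ∃ w, N.M v = some w ∧ I.rank v u < I.rank v w)

def SRI.Stable (I : SRI V) (N : I.Matching) : Prop := ∀ u v, ¬ I.Blocks N u v

/-- Cost of a matching: the sum of `rank a (M a)` over matched agents `a`. -/
def SRI.cost (I : SRI V) (N : I.Matching) : ℕ :=
  ∑ v : V, (N.M v).elim 0 (I.rank v)

/-- Every preference list has length at most `d`. -/
def SRI.MaxDeg (I : SRI V) (d : ℕ) : Prop := ∀ v, Set.ncard {w | I.G.Adj v w} ≤ d

/-- An egalitarian stable matching minimises cost among stable matchings. -/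
def SRI.Egalitarian (I : SRI V) (N : I.Matching) : Prop :=
  I.Stable N ∧ ∀ N' : I.Matching, I.Stable N' → I.cost N ≤ I.cost N'

/-!
Say an agent prefers `P` to `Q` if it strictly prefers its partner in `P` to its situation in
`Q`. For stable `P` and `Q`, the `P`-partner of an agent preferring `P` prefers `Q` (otherwise the
two block `Q`), and this map is injective. Hence equally many agents prefer either matching, which
also forces every agent matched in `P` to be matched in `Q`. With lists of length at most
`d ≥ 2`, an agent preferring `P` has `1 ≤ rank_P < rank_Q ≤ d` and one preferring `Q` has
`1 ≤ rank_Q < rank_P ≤ d`; trading them off one for one gives `3 c(P) ≤ (d + 1) c(Q)`,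
which for `d = 5` is `c(P) ≤ 2 c(Q)`.
-/

open Finset

lemma sum_le_sum_of_transfer {ι : Type*} [Fintype ι] {A B : Finset ι} (hAB : #A = #B)
    {f g : ι → ℕ} {c : ℕ} (hA : ∀ i ∈ A, f i + c ≤ g i) (hB : ∀ i ∈ B, f i ≤ g i + c)
    (hrest : ∀ i, i ∉ A → i ∉ B → f i ≤ g i) : ∑ i, f i ≤ ∑ i, g i := by
  classical
  have key : ∑ i, (f i + if i ∈ A then c else 0) ≤ ∑ i, (g i + if i ∈ B then c else 0) := by
    refine sum_le_sum fun i _ => ?_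
    by_cases hiA : i ∈ A
    · have := hA i hiA
      split_ifs <;> omega
    · by_cases hiB : i ∈ B
      · simpa [hiA, hiB] using hB i hiB
      · simpa [hiA, hiB] using hrest i hiA hiB
  simp only [sum_add_distrib, sum_ite_mem, univ_inter, sum_const, smul_eq_mul] at key
  rw [hAB] at key
  omega

namespace SRI

variable (I : SRI V)

lemma one_le_rank {u v : V} (h : I.G.Adj u v) : 1 ≤ I.rank u v := by
  rw [I.rank_eq u v h]; omega

lemma rank_le_of_maxDeg {d : ℕ} (hd : I.MaxDeg d) {u v : V} (h : I.G.Adj u v) :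
    I.rank u v ≤ d := by
  have hlt : {w | I.G.Adj u w ∧ I.rank u w < I.rank u v}.ncard < {w | I.G.Adj u w}.ncard :=
    Set.ncard_lt_ncard ⟨fun w hw => hw.1, fun hsup => (hsup h).2.false⟩ (Set.toFinite _)
  have := I.rank_eq u v h
  have := hd u
  omega

/-- Being unmatched in `Q` counts as worse than any partner. -/
def Prefers (P Q : I.Matching) (v : V) : Prop :=
  ∃ x, P.M v = some x ∧ ∀ y, Q.M v = some y → I.rank v x < I.rank v y

def partnerRank (N : I.Matching) (v : V) : ℕ := (N.M v).elim 0 (I.rank v)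

lemma cost_eq_sum_partnerRank (N : I.Matching) : I.cost N = ∑ v, I.partnerRank N v := rfl

variable {I}

lemma partnerRank_of_eq_some {N : I.Matching} {v x : V} (h : N.M v = some x) :
    I.partnerRank N v = I.rank v x := by
  simp [partnerRank, h]

lemma partnerRank_le {d : ℕ} (hd : I.MaxDeg d) (N : I.Matching) (v : V) :
    I.partnerRank N v ≤ d := by
  cases h : N.M v with
  | none => simp [partnerRank, h]
  | some x => rw [partnerRank_of_eq_some h]; exact I.rank_le_of_maxDeg hd (N.adj v x h)

/-- The partner of `v`, with the junk value `v` when `v` is unmatched. -/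
def Matching.mate (N : I.Matching) (v : V) : V := (N.M v).getD v

lemma Matching.mate_of_eq_some {N : I.Matching} {v x : V} (h : N.M v = some x) :
    N.mate v = x := by
  simp [mate, h]

lemma Matching.injOn_mate (N : I.Matching) : Set.InjOn N.mate {v | (N.M v).isSome} := by
  intro v hv w hw hvw
  obtain ⟨x, hx⟩ := Option.isSome_iff_exists.mp hv
  obtain ⟨y, hy⟩ := Option.isSome_iff_exists.mp hw
  rw [mate_of_eq_some hx, mate_of_eq_some hy] at hvw
  subst hvw
  simpa using (N.symm _ _ hx).symm.trans (N.symm _ _ hy)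

variable {P Q : I.Matching}

lemma Prefers.prefers_mate (hQ : I.Stable Q) {v : V} (hv : I.Prefers P Q v) :
    I.Prefers Q P (P.mate v) := by
  obtain ⟨w, hw, hbetter⟩ := hv
  rw [Matching.mate_of_eq_some hw]
  have hadj := P.adj v w hw
  have hQv : Q.M v ≠ some w := fun h => (hbetter w h).false
  obtain ⟨z, hz, hzv⟩ : ∃ z, Q.M w = some z ∧ ¬ I.rank w v < I.rank w z := by
    by_contra! hcon
    refine hQ v w ⟨hadj, hQv, ?_, ?_⟩
    · cases hq : Q.M v with
      | none => exact Or.inl rfl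
      | some y => exact Or.inr ⟨y, rfl, hbetter y hq⟩
    · cases hq : Q.M w with
      | none => exact Or.inl rfl
      | some z => exact Or.inr ⟨z, rfl, hcon z hq⟩
  refine ⟨z, hz, fun y hy => ?_⟩
  obtain rfl : v = y := by simpa using (P.symm _ _ hw).symm.trans hy
  have hzv' : z ≠ v := by rintro rfl; exact hQv (Q.symm _ _ hz)
  exact lt_of_le_of_ne (not_lt.mp hzv)
    fun h => hzv' (I.rank_inj w z v (Q.adj _ _ hz) hadj.symm h)

lemma mapsTo_mate_prefers (hQ : I.Stable Q) :
    Set.MapsTo P.mate {v | I.Prefers P Q v} {v | I.Prefers Q P v} :=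
  fun _ hv => Prefers.prefers_mate hQ hv

lemma injOn_mate_prefers : Set.InjOn P.mate {v | I.Prefers P Q v} :=
  P.injOn_mate.mono fun _ ⟨_, hx, _⟩ => by simp [hx]

open Classical in
lemma card_prefers_le (hQ : I.Stable Q) : #{v | I.Prefers P Q v} ≤ #{v | I.Prefers Q P v} :=
  card_le_card_of_injOn P.mate (by simpa using mapsTo_mate_prefers hQ)
    (by simpa using injOn_mate_prefers)

open Classical in
lemma card_prefers_eq (hP : I.Stable P) (hQ : I.Stable Q) :
    #{v | I.Prefers P Q v} = #{v | I.Prefers Q P v} :=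
  (card_prefers_le hQ).antisymm (card_prefers_le hP)

lemma Stable.matched_of_matched (hP : I.Stable P) (hQ : I.Stable Q) {v w : V}
    (hv : P.M v = some w) : ∃ x, Q.M v = some x := by
  classical
  by_contra! hunmatched
  have hvA : I.Prefers P Q v := ⟨w, hv, fun y hy => absurd hy (hunmatched y)⟩
  -- `Q.mate` injects the agents preferring `Q` into the equally many agents preferring `P`,
  -- so it hits `v`, whence `v` is matched in `Q`.
  obtain ⟨b, hb, hbv⟩ := surjOn_of_injOn_of_card_le Q.mate
    (by simpa using mapsTo_mate_prefers hP) (by simpa using injOn_mate_prefers)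
    (card_prefers_le hQ) (by simpa using hvA)
  obtain ⟨x, hx, -⟩ : I.Prefers Q P b := by simpa using hb
  rw [Matching.mate_of_eq_some hx] at hbv
  exact hunmatched b (Q.symm b v (hbv ▸ hx))

lemma Prefers.partnerRank_lt (hP : I.Stable P) (hQ : I.Stable Q) {v : V}
    (hv : I.Prefers P Q v) : 1 ≤ I.partnerRank P v ∧ I.partnerRank P v < I.partnerRank Q v := by
  obtain ⟨x, hx, hbetter⟩ := hv
  obtain ⟨y, hy⟩ := hP.matched_of_matched hQ hx
  rw [partnerRank_of_eq_some hx, partnerRank_of_eq_some hy]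
  exact ⟨I.one_le_rank (P.adj v x hx), hbetter y hy⟩

lemma partnerRank_eq_of_not_prefers {v : V} (hPQ : ¬ I.Prefers P Q v)
    (hQP : ¬ I.Prefers Q P v) : I.partnerRank P v = I.partnerRank Q v := by
  cases hp : P.M v with
  | none =>
    cases hq : Q.M v with
    | none => simp [partnerRank, hp, hq]
    | some y => exact absurd ⟨y, hq, by simp [hp]⟩ hQP
  | some x =>
    cases hq : Q.M v with
    | none => exact absurd ⟨x, hp, by simp [hq]⟩ hPQ
    | some y =>
      rw [partnerRank_of_eq_some hp, partnerRank_of_eq_some hq]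
      have hxy : ¬ I.rank v x < I.rank v y := fun h => hPQ ⟨x, hp, by simpa [hq] using h⟩
      have hyx : ¬ I.rank v y < I.rank v x := fun h => hQP ⟨y, hq, by simpa [hp] using h⟩
      omega

theorem three_mul_cost_le {d : ℕ} (hd : I.MaxDeg d) (hd2 : 2 ≤ d) (hP : I.Stable P)
    (hQ : I.Stable Q) : 3 * I.cost P ≤ (d + 1) * I.cost Q := by
  classical
  simp only [cost_eq_sum_partnerRank, mul_sum]
  -- An agent preferring `P` pays at least `c = 2d - 1` more in `(d + 1) c(Q)` than in `3 c(P)`,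
  -- an agent preferring `Q` at most `c` less, and there are equally many of each.
  obtain ⟨c, hc⟩ : ∃ c, c + 1 = 2 * d := ⟨2 * d - 1, by omega⟩
  refine sum_le_sum_of_transfer (card_prefers_eq hP hQ) (c := c)
    (fun v hv => ?_) (fun v hv => ?_) (fun v hPQ hQP => ?_)
  · obtain ⟨hpos, hlt⟩ := Prefers.partnerRank_lt hP hQ (by simpa using hv)
    have := partnerRank_le hd Q v
    nlinarith
  · obtain ⟨hpos, hlt⟩ := Prefers.partnerRank_lt hQ hP (by simpa using hv)
    have := partnerRank_le hd P v
    nlinarith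
  · rw [partnerRank_eq_of_not_prefers (by simpa using hPQ) (by simpa using hQP)]
    nlinarith

end SRI

theorem stmt6_general (I : SRI V) (h5 : I.MaxDeg 5)
    (N Ne : I.Matching) (hN : I.Stable N) (hNe : I.Egalitarian Ne) :
    I.cost N ≤ 2 * I.cost Ne := by
  have := I.three_mul_cost_le h5 (by norm_num) hN hNe.1
  omega

/-- In a solvable 5-SRI instance without (1,1)- and (5,5)-pairs,
any stable matching satisfies `c(M) ≤ 2 c(M_egal)`. -/
theorem stmt6 (I : SRI V) (h5 : I.MaxDeg 5)
    (h11 : ∀ u v, I.G.Adj u v → ¬ (I.rank u v = 1 ∧ I.rank v u = 1))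
    (h55 : ∀ u v, I.G.Adj u v → ¬ (I.rank u v = 5 ∧ I.rank v u = 5))
    (N Ne : I.Matching) (hN : I.Stable N) (hNe : I.Egalitarian Ne) :
    I.cost N ≤ 2 * I.cost Ne :=
  stmt6_general I h5 N Ne hN hNe
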